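/- arXiv:1609.07546 — 2 statements merged into one kernel-verified Lean document; each statement's English description precedes it below -/
import Mathlib

section
/- Stuttering Lemma: if r --τ--> r1 --τ--> ⋯ --τ--> rm --τ--> r' is a path of silent transitions with r ≈ s and r' ≈ s, then ri ≈ s for all 1 ≤ i ≤ m. -/
/-- A finite (possibly empty) sequence of τ-transitions. -/
def TauSeq {S A : Type*} (tr : S → A → S → Prop) (τ : A) : S → S → Prop :=
  Relation.ReflTransGen (fun s s' => tr s τ s')

/-- `R` is a branching bisimulation on the LTS with transition relation `tr`
and silent action `τ`. -/
def IsBranchingBisim {S A : Type*} (tr : S → A → S → Prop) (τ : A)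
    (R : S → S → Prop) : Prop :=
  (∀ s t, R s t → R t s) ∧
  ∀ s1 s2, R s1 s2 →
    (∀ a s1', tr s1 a s1' → a ≠ τ →
      ∃ l s2', TauSeq tr τ s2 l ∧ tr l a s2' ∧ R s1 l ∧ R s1' s2') ∧
    (∀ s1', tr s1 τ s1' →
      R s1' s2 ∨ ∃ l s2', TauSeq tr τ s2 l ∧ tr l τ s2' ∧ R s1 l ∧ R s1' s2')

/-- Branching bisimilarity: the union of all branching bisimulations. -/
def BBisim {S A : Type*} (tr : S → A → S → Prop) (τ : A) (s t : S) : Prop :=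
  ∃ R, IsBranchingBisim tr τ R ∧ R s t

section Aux

variable {S A : Type*} (tr : S → A → S → Prop) (τ : A)

/-- Semi-branching bisimulation (Basten): a τ-step is matched by `s2 ⇒ l`
with `s1 R l`, after which we may either stay (`s1' R l`) or take one τ-step. -/
def IsSB (R : S → S → Prop) : Prop :=
  (∀ s t, R s t → R t s) ∧
  ∀ s1 s2, R s1 s2 →
    (∀ a s1', tr s1 a s1' → a ≠ τ →
      ∃ l s2', TauSeq tr τ s2 l ∧ tr l a s2' ∧ R s1 l ∧ R s1' s2') ∧
    (∀ s1', tr s1 τ s1' →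
      ∃ l, TauSeq tr τ s2 l ∧ R s1 l ∧
        (R s1' l ∨ ∃ s2', tr l τ s2' ∧ R s1' s2'))

/-- Semi-branching bisimilarity. -/
def SB (s t : S) : Prop := ∃ R, IsSB tr τ R ∧ R s t

variable {tr τ}

lemma tauSeq_refl {x : S} : TauSeq tr τ x x := Relation.ReflTransGen.refl

lemma tauSeq_trans {x y z : S} (h1 : TauSeq tr τ x y) (h2 : TauSeq tr τ y z) :
    TauSeq tr τ x z := Relation.ReflTransGen.trans h1 h2

lemma tauSeq_tail {x y z : S} (h1 : TauSeq tr τ x y) (h2 : tr y τ z) :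
    TauSeq tr τ x z := Relation.ReflTransGen.tail h1 h2

/-- Every branching bisimulation is a semi-branching bisimulation. -/
lemma isSB_of_isBB {R : S → S → Prop} (h : IsBranchingBisim tr τ R) : IsSB tr τ R := by
  refine ⟨h.1, fun s1 s2 hR => ⟨(h.2 s1 s2 hR).1, fun s1' hs => ?_⟩⟩
  rcases (h.2 s1 s2 hR).2 s1' hs with h1 | ⟨l, s2', h2, h3, h4, h5⟩
  · exact ⟨s2, tauSeq_refl, hR, Or.inl h1⟩
  · exact ⟨l, h2, h4, Or.inr ⟨s2', h3, h5⟩⟩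

lemma sb_symm {p q : S} (h : SB tr τ p q) : SB tr τ q p := by
  obtain ⟨R, hR, hpq⟩ := h
  exact ⟨R, hR, hR.1 _ _ hpq⟩

/-- `SB` is itself a semi-branching bisimulation. -/
lemma isSB_SB : IsSB tr τ (SB tr τ) := by
  refine ⟨fun s t h => sb_symm h, fun s1 s2 h => ?_⟩
  obtain ⟨R, hR, hpq⟩ := h
  constructor
  · intro a s1' htr ha
    obtain ⟨l, s2', h1, h2, h3, h4⟩ := (hR.2 s1 s2 hpq).1 a s1' htr ha
    exact ⟨l, s2', h1, h2, ⟨R, hR, h3⟩, ⟨R, hR, h4⟩⟩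
  · intro s1' htr
    obtain ⟨l, h1, h2, h3⟩ := (hR.2 s1 s2 hpq).2 s1' htr
    refine ⟨l, h1, ⟨R, hR, h2⟩, ?_⟩
    rcases h3 with h3 | ⟨s2', h4, h5⟩
    · exact Or.inl ⟨R, hR, h3⟩
    · exact Or.inr ⟨s2', h4, ⟨R, hR, h5⟩⟩

/-- τ-closure: `SB` matches sequences of τ-steps. -/
lemma sb_tauSeq {p p' q : S} (hpq : SB tr τ p q) (h : TauSeq tr τ p p') :
    ∃ q', TauSeq tr τ q q' ∧ SB tr τ p' q' := by
  unfold TauSeq at h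
  induction h with
  | refl => exact ⟨q, tauSeq_refl, hpq⟩
  | tail hab hbc ih =>
    obtain ⟨q', hq', hbq'⟩ := ih
    obtain ⟨l, hl, _, hcase⟩ := (isSB_SB.2 _ _ hbq').2 _ hbc
    rcases hcase with h1 | ⟨s2', hs2', h2⟩
    · exact ⟨l, tauSeq_trans hq' hl, h1⟩
    · exact ⟨s2', tauSeq_tail (tauSeq_trans hq' hl) hs2', h2⟩

/-- Stuttering for semi-branching bisimilarity: if `r ⇒ k ⇒ r'` with
`r ≈ s` and `r' ≈ s`, then `k ≈ s`. -/
lemma sb_stutter {r r' s k : S} (h1 : SB tr τ r s) (h2 : SB tr τ r' s)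
    (hk1 : TauSeq tr τ r k) (hk2 : TauSeq tr τ k r') : SB tr τ k s := by
  classical
  set R' : S → S → Prop := fun x y =>
    SB tr τ x y ∨ (TauSeq tr τ r x ∧ TauSeq tr τ x r' ∧ y = s) ∨
      (x = s ∧ TauSeq tr τ r y ∧ TauSeq tr τ y r') with hR'
  refine ⟨R', ⟨?_, ?_⟩, Or.inr (Or.inl ⟨hk1, hk2, rfl⟩)⟩
  · rintro x y (h | ⟨hx1, hx2, rfl⟩ | ⟨rfl, hy1, hy2⟩)
    · exact Or.inl (sb_symm h)
    · exact Or.inr (Or.inr ⟨rfl, hx1, hx2⟩)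
    · exact Or.inr (Or.inl ⟨hy1, hy2, rfl⟩)
  · rintro x y (h | ⟨hx1, hx2, rfl⟩ | ⟨rfl, hy1, hy2⟩)
    · -- pairs already in SB
      refine ⟨fun a x' htr ha => ?_, fun x' htr => ?_⟩
      · obtain ⟨l, s2', u1, u2, u3, u4⟩ := (isSB_SB.2 _ _ h).1 a x' htr ha
        exact ⟨l, s2', u1, u2, Or.inl u3, Or.inl u4⟩
      · obtain ⟨l, u1, u2, u3⟩ := (isSB_SB.2 _ _ h).2 x' htr
        refine ⟨l, u1, Or.inl u2, ?_⟩
        rcases u3 with u3 | ⟨s2', u4, u5⟩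
        · exact Or.inl (Or.inl u3)
        · exact Or.inr ⟨s2', u4, Or.inl u5⟩
    · -- x on the path, y = s
      obtain ⟨t, hst, hxt⟩ := sb_tauSeq h1 hx1
      refine ⟨fun a x' htr ha => ?_, fun x' htr => ?_⟩
      · obtain ⟨l, s2', u1, u2, u3, u4⟩ := (isSB_SB.2 _ _ hxt).1 a x' htr ha
        exact ⟨l, s2', tauSeq_trans hst u1, u2, Or.inl u3, Or.inl u4⟩
      · obtain ⟨l, u1, u2, u3⟩ := (isSB_SB.2 _ _ hxt).2 x' htr
        refine ⟨l, tauSeq_trans hst u1, Or.inl u2, ?_⟩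
        rcases u3 with u3 | ⟨s2', u4, u5⟩
        · exact Or.inl (Or.inl u3)
        · exact Or.inr ⟨s2', u4, Or.inl u5⟩
    · -- x = s, y on the path
      have hsr' : SB tr τ x r' := sb_symm h2
      refine ⟨fun a x' htr ha => ?_, fun x' htr => ?_⟩
      · obtain ⟨l, s2', u1, u2, u3, u4⟩ := (isSB_SB.2 _ _ hsr').1 a x' htr ha
        exact ⟨l, s2', tauSeq_trans hy2 u1, u2, Or.inl u3, Or.inl u4⟩
      · obtain ⟨l, u1, u2, u3⟩ := (isSB_SB.2 _ _ hsr').2 x' htr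
        refine ⟨l, tauSeq_trans hy2 u1, Or.inl u2, ?_⟩
        rcases u3 with u3 | ⟨s2', u4, u5⟩
        · exact Or.inl (Or.inl u3)
        · exact Or.inr ⟨s2', u4, Or.inl u5⟩

/-- The largest semi-branching bisimulation is a branching bisimulation. -/
lemma isBB_SB : IsBranchingBisim tr τ (SB tr τ) := by
  refine ⟨fun s t h => sb_symm h, fun s1 s2 h => ⟨(isSB_SB.2 s1 s2 h).1, fun s1' hs => ?_⟩⟩
  obtain ⟨l, hql, hs1l, hcase⟩ := (isSB_SB.2 s1 s2 h).2 s1' hs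
  rcases hcase with h1 | ⟨s2', htr, h2⟩
  · rcases Relation.ReflTransGen.cases_tail hql with rfl | ⟨k, hqk, hkl⟩
    · exact Or.inl h1
    · have hk : SB tr τ k s1 :=
        sb_stutter (sb_symm h) (sb_symm hs1l) hqk (Relation.ReflTransGen.single hkl)
      exact Or.inr ⟨k, l, hqk, hkl, sb_symm hk, h1⟩
  · exact Or.inr ⟨l, s2', hql, htr, hs1l, h2⟩

end Aux

/-- Stuttering Lemma: if `r = f 0 --τ--> f 1 --τ--> ⋯ --τ--> f m --τ--> f (m+1) = r'`
is a path of silent transitions with `r ≈ s` and `r' ≈ s`, then `f i ≈ s` for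
all `1 ≤ i ≤ m`. -/
theorem stmt2 {S A : Type*} (tr : S → A → S → Prop) (τ : A)
    (m : ℕ) (f : ℕ → S) (s : S)
    (hstep : ∀ i, i ≤ m → tr (f i) τ (f (i + 1)))
    (h0 : BBisim tr τ (f 0) s) (hend : BBisim tr τ (f (m + 1)) s) :
    ∀ i, 1 ≤ i → i ≤ m → BBisim tr τ (f i) s := by
  have hpath : ∀ j k : ℕ, j ≤ k → k ≤ m + 1 → TauSeq tr τ (f j) (f k) := by
    intro j k hjk hk
    induction k with
    | zero =>
      obtain rfl : j = 0 := Nat.le_zero.mp hjk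
      exact tauSeq_refl
    | succ n ih =>
      rcases Nat.lt_or_ge j (n + 1) with hlt | hge
      · exact tauSeq_tail (ih (by omega) (by omega)) (hstep n (by omega))
      · obtain rfl : j = n + 1 := le_antisymm hjk hge
        exact tauSeq_refl
  obtain ⟨R0, hR0, hr0⟩ := h0
  obtain ⟨R1, hR1, hr1⟩ := hend
  have hs0 : SB tr τ (f 0) s := ⟨R0, isSB_of_isBB hR0, hr0⟩
  have hse : SB tr τ (f (m + 1)) s := ⟨R1, isSB_of_isBB hR1, hr1⟩
  intro i h1 h2
  have hi : SB tr τ (f i) s :=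
    sb_stutter hs0 hse (hpath 0 i (Nat.zero_le _) (by omega)) (hpath i (m + 1) (by omega) le_rfl)
  exact ⟨SB tr τ, isBB_SB, hi⟩
end

section
/- The relational composition of branching bisimilarity with itself is contained in branching bisimilarity: if s1 ≈ s2 and s2 ≈ s3 then s1 ≈ s3 (transitivity of ≈ via composition of branching bisimulations, using the Stuttering Lemma). -/
section Semi

variable {S A : Type*} (tr : S → A → S → Prop) (τ : A)

/-- Semi-branching bisimulation (Basten). -/
def IsSemiBB (R : S → S → Prop) : Prop :=
  (∀ s t, R s t → R t s) ∧
  ∀ s1 s2, R s1 s2 →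
    (∀ a s1', tr s1 a s1' → a ≠ τ →
      ∃ l s2', TauSeq tr τ s2 l ∧ tr l a s2' ∧ R s1 l ∧ R s1' s2') ∧
    (∀ s1', tr s1 τ s1' →
      ∃ l s2', TauSeq tr τ s2 l ∧ (tr l τ s2' ∨ l = s2') ∧ R s1 l ∧ R s1' s2')

def SBB (s t : S) : Prop := ∃ R, IsSemiBB tr τ R ∧ R s t

variable {tr τ}

theorem branching_semi {R : S → S → Prop} (h : IsBranchingBisim tr τ R) :
    IsSemiBB tr τ R := by
  obtain ⟨hsym, htrans⟩ := h
  refine ⟨hsym, fun s1 s2 hR => ⟨(htrans s1 s2 hR).1, fun s1' hstep => ?_⟩⟩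
  rcases (htrans s1 s2 hR).2 s1' hstep with h | ⟨l, s2', h1, h2, h3, h4⟩
  · exact ⟨s2, s2, Relation.ReflTransGen.refl, Or.inr rfl, hR, h⟩
  · exact ⟨l, s2', h1, Or.inl h2, h3, h4⟩

theorem sbb_isSemi : IsSemiBB tr τ (SBB tr τ) := by
  constructor
  · rintro s t ⟨R, hR, hst⟩
    exact ⟨R, hR, hR.1 _ _ hst⟩
  · rintro s1 s2 ⟨R, hR, hst⟩
    constructor
    · intro a s1' h hne
      obtain ⟨l, s2', h1, h2, h3, h4⟩ := ((hR.2 s1 s2 hst).1 a s1' h hne)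
      exact ⟨l, s2', h1, h2, ⟨R, hR, h3⟩, ⟨R, hR, h4⟩⟩
    · intro s1' h
      obtain ⟨l, s2', h1, h2, h3, h4⟩ := ((hR.2 s1 s2 hst).2 s1' h)
      exact ⟨l, s2', h1, h2, ⟨R, hR, h3⟩, ⟨R, hR, h4⟩⟩

/-- Stuttering transfer: semi-branching bisimulations preserve τ-sequences. -/
theorem tauseq_transfer {R : S → S → Prop} (h : IsSemiBB tr τ R)
    {s s' t : S} (hR : R s t) (hs : TauSeq tr τ s s') :
    ∃ t', TauSeq tr τ t t' ∧ R s' t' := by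
  induction hs with
  | refl => exact ⟨t, Relation.ReflTransGen.refl, hR⟩
  | tail hbc hstep ih =>
    obtain ⟨t', ht', hRt'⟩ := ih
    obtain ⟨l, s2', h1, h2, _, h4⟩ := (h.2 _ _ hRt').2 _ hstep
    refine ⟨s2', ht'.trans (h1.trans ?_), h4⟩
    rcases h2 with h2 | rfl
    · exact Relation.ReflTransGen.single h2
    · exact Relation.ReflTransGen.refl

/-- Transfer conditions for the composition of two semi-branching bisimulations. -/
theorem comp_transfer {R Q : S → S → Prop} (hR : IsSemiBB tr τ R)
    (hQ : IsSemiBB tr τ Q) {s1 s2 : S} (h : ∃ t, R s1 t ∧ Q t s2) :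
    (∀ a s1', tr s1 a s1' → a ≠ τ →
      ∃ l s2', TauSeq tr τ s2 l ∧ tr l a s2' ∧ (∃ t, R s1 t ∧ Q t l) ∧
        (∃ t, R s1' t ∧ Q t s2')) ∧
    (∀ s1', tr s1 τ s1' →
      ∃ l s2', TauSeq tr τ s2 l ∧ (tr l τ s2' ∨ l = s2') ∧ (∃ t, R s1 t ∧ Q t l) ∧
        (∃ t, R s1' t ∧ Q t s2')) := by
  obtain ⟨t, hst, hts⟩ := h
  constructor
  · intro a s1' hstep hne
    obtain ⟨l2, t', h1, h2, h3, h4⟩ := (hR.2 _ _ hst).1 a s1' hstep hne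
    obtain ⟨l3, hl3, hQl⟩ := tauseq_transfer hQ hts h1
    obtain ⟨m, s3', g1, g2, g3, g4⟩ := (hQ.2 _ _ hQl).1 a t' h2 hne
    exact ⟨m, s3', hl3.trans g1, g2, ⟨l2, h3, g3⟩, ⟨t', h4, g4⟩⟩
  · intro s1' hstep
    obtain ⟨l2, t', h1, h2, h3, h4⟩ := (hR.2 _ _ hst).2 s1' hstep
    obtain ⟨l3, hl3, hQl⟩ := tauseq_transfer hQ hts h1
    rcases h2 with h2 | rfl
    · obtain ⟨m, s3', g1, g2, g3, g4⟩ := (hQ.2 _ _ hQl).2 t' h2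
      exact ⟨m, s3', hl3.trans g1, g2, ⟨l2, h3, g3⟩, ⟨t', h4, g4⟩⟩
    · exact ⟨l3, l3, hl3, Or.inr rfl, ⟨l2, h3, hQl⟩, ⟨l2, h4, hQl⟩⟩

/-- The symmetrized composition of two semi-branching bisimulations is one. -/
theorem comp_isSemi {R Q : S → S → Prop} (hR : IsSemiBB tr τ R)
    (hQ : IsSemiBB tr τ Q) :
    IsSemiBB tr τ (fun s u => (∃ t, R s t ∧ Q t u) ∨ (∃ t, Q s t ∧ R t u)) := by
  constructor
  · rintro s u (⟨t, h1, h2⟩ | ⟨t, h1, h2⟩)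
    · exact Or.inr ⟨t, hQ.1 _ _ h2, hR.1 _ _ h1⟩
    · exact Or.inl ⟨t, hR.1 _ _ h2, hQ.1 _ _ h1⟩
  · rintro s1 s2 (h | h)
    · obtain ⟨c1, c2⟩ := comp_transfer hR hQ h
      constructor
      · intro a s1' hs hne
        obtain ⟨l, s2', g1, g2, g3, g4⟩ := c1 a s1' hs hne
        exact ⟨l, s2', g1, g2, Or.inl g3, Or.inl g4⟩
      · intro s1' hs
        obtain ⟨l, s2', g1, g2, g3, g4⟩ := c2 s1' hs
        exact ⟨l, s2', g1, g2, Or.inl g3, Or.inl g4⟩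
    · obtain ⟨c1, c2⟩ := comp_transfer hQ hR h
      constructor
      · intro a s1' hs hne
        obtain ⟨l, s2', g1, g2, g3, g4⟩ := c1 a s1' hs hne
        exact ⟨l, s2', g1, g2, Or.inr g3, Or.inr g4⟩
      · intro s1' hs
        obtain ⟨l, s2', g1, g2, g3, g4⟩ := c2 s1' hs
        exact ⟨l, s2', g1, g2, Or.inr g3, Or.inr g4⟩

theorem sbb_trans {s1 s2 s3 : S} (h12 : SBB tr τ s1 s2) (h23 : SBB tr τ s2 s3) :
    SBB tr τ s1 s3 := by
  obtain ⟨R, hR, hr⟩ := h12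
  obtain ⟨Q, hQ, hq⟩ := h23
  exact ⟨_, comp_isSemi hR hQ, Or.inl ⟨s2, hr, hq⟩⟩

/-- The largest semi-branching bisimulation is a branching bisimulation. -/
theorem sbb_isBranching : IsBranchingBisim tr τ (SBB tr τ) := by
  have hS := sbb_isSemi (tr := tr) (τ := τ)
  refine ⟨hS.1, fun s1 s2 h => ⟨(hS.2 s1 s2 h).1, fun s1' hstep => ?_⟩⟩
  obtain ⟨l, s2', h1, h2, h3, h4⟩ := (hS.2 s1 s2 h).2 s1' hstep
  rcases h2 with h2 | rfl
  · exact Or.inr ⟨l, s2', h1, h2, h3, h4⟩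
  · -- l = s2', so SBB s1' l, SBB l s1, SBB s1 s2 ⟹ SBB s1' s2
    exact Or.inl (sbb_trans (sbb_trans h4 (hS.1 _ _ h3)) h)

end Semi

/-- The composition of branching bisimilarity with itself is contained in
branching bisimilarity: `≈` is transitive. -/
theorem stmt19 {S A : Type*} (tr : S → A → S → Prop) (τ : A)
    {s1 s2 s3 : S} (h12 : BBisim tr τ s1 s2) (h23 : BBisim tr τ s2 s3) :
    BBisim tr τ s1 s3 := by
  obtain ⟨R, hR, hr⟩ := h12
  obtain ⟨Q, hQ, hq⟩ := h23
  have h1 : SBB tr τ s1 s2 := ⟨R, branching_semi hR, hr⟩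
  have h2 : SBB tr τ s2 s3 := ⟨Q, branching_semi hQ, hq⟩
  exact ⟨SBB tr τ, sbb_isBranching, sbb_trans h1 h2⟩
end
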